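/- Let κ ≥ 2, let δ > 0 be fixed, and let γ_1,…,γ_κ be real numbers with γ_j > 1/2 for all j. Let D = (d_{ij}) be an m×κ matrix with entries in {0,1,−1} such that every column has exactly one nonzero entry and every row has at least one nonzero entry. For 1 ≤ i ≤ m let I_i(D) = { j : d_{ij} ≠ 0 } be the set of column indices whose nonzero entry lies in row i, and set Γ_i(D) = Σ_{j ∈ I_i(D)} γ_j. Then for all n ≥ 1: V_n^{−2Σ_{j=1}^κ γ_j} ∫_{ℝ^n}⋯∫_{ℝ^n} ∏_{j=1}^κ ( | Σ_{i=1}^m d_{ij}·x_i |^{−2γ_j n} · 1_{ | Σ_{i=1}^m d_{ij}·x_i | > R_n(δ) } ) dx_1⋯dx_m = δ^{m − 2Σ_{j=1}^κ γ_j} · ∏_{i=1}^m 1/(2 Γ_i(D) − 1). -/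

import Mathlib

/-!
Every column of `D` has a single nonzero entry `±1`, in row `r j` say, so the `j`-th factor only
depends on `‖x (r j)‖`, and the factors of one row `i` merge into `‖x i‖^{-2 Γ_i n} 1_{‖x i‖ > R}`.
The integrand is then a product of functions of the separate variables `x i`, and the integral
splits into `m` radial integrals. In polar coordinates
`∫_{‖y‖ > R} ‖y‖^{-p} dy = n V_n R^{n - p} / (p - n)`, finite because `p = 2 Γ_i n > n`, and the
choice `R = R_n(δ)`, i.e. `V_n R^n = δ`, turns it into `V_n^{2 Γ_i} δ^{1 - 2 Γ_i} / (2 Γ_i - 1)`.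
-/

open MeasureTheory

/-- `V_n = π^{n/2} / Γ(n/2 + 1)`, the volume of the unit ball in `ℝⁿ`. -/
noncomputable def unitBallVol (n : ℕ) : ℝ :=
  Real.pi ^ ((n : ℝ) / 2) / Real.Gamma ((n : ℝ) / 2 + 1)

/-- `R_n(δ) = (δ / V_n)^{1/n}`, the radius of a ball of volume `δ` in `ℝⁿ`. -/
noncomputable def cutRadius (n : ℕ) (δ : ℝ) : ℝ :=
  (δ / unitBallVol n) ^ (1 / (n : ℝ))

noncomputable def cutPow (R p t : ℝ) : ℝ :=
  if R < t then t ^ (-p) else 0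

lemma unitBallVol_pos (n : ℕ) : 0 < unitBallVol n :=
  div_pos (Real.rpow_pos_of_pos Real.pi_pos _) (Real.Gamma_pos_of_pos (by positivity))

lemma cutRadius_pos (n : ℕ) {δ : ℝ} (hδ : 0 < δ) : 0 < cutRadius n δ :=
  Real.rpow_pos_of_pos (div_pos hδ (unitBallVol_pos n)) _

lemma cutRadius_rpow_natCast_mul {n : ℕ} (hn : n ≠ 0) {δ : ℝ} (hδ : 0 ≤ δ) (s : ℝ) :
    cutRadius n δ ^ ((n : ℝ) * s) = (δ / unitBallVol n) ^ s := by
  have hn' : (n : ℝ) ≠ 0 := Nat.cast_ne_zero.mpr hn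
  rw [cutRadius, ← Real.rpow_mul (div_nonneg hδ (unitBallVol_pos n).le)]
  field_simp

lemma EuclideanSpace.measureReal_ball_zero_one {n : ℕ} (hn : n ≠ 0) :
    volume.real (Metric.ball (0 : EuclideanSpace ℝ (Fin n)) 1) = unitBallVol n := by
  have : Nonempty (Fin n) := ⟨⟨0, Nat.pos_of_ne_zero hn⟩⟩
  rw [measureReal_def, EuclideanSpace.volume_ball, Fintype.card_fin, ENNReal.ofReal_one, one_pow,
    one_mul, ENNReal.toReal_ofReal (div_nonneg (by positivity) (Real.Gamma_pos_of_pos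
      (by positivity)).le), unitBallVol, Real.sqrt_eq_rpow,
    ← Real.rpow_mul_natCast Real.pi_pos.le]
  ring_nf

lemma prod_cutPow {ι : Type*} {s : Finset ι} (hs : s.Nonempty) {R : ℝ} (hR : 0 ≤ R)
    (p : ι → ℝ) (t : ℝ) :
    ∏ j ∈ s, cutPow R (p j) t = cutPow R (∑ j ∈ s, p j) t := by
  by_cases h : R < t
  · simp only [cutPow, if_pos h]
    rw [← Real.rpow_sum_of_pos (hR.trans_lt h), Finset.sum_neg_distrib]
  · obtain ⟨j, hj⟩ := hs
    simp only [cutPow, if_neg h]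
    exact Finset.prod_eq_zero hj rfl

lemma integral_Ioi_pow_smul_cutPow {d : ℕ} (hd : d ≠ 0) {R p : ℝ} (hR : 0 < R)
    (hp : (d : ℝ) < p) :
    ∫ t in Set.Ioi (0 : ℝ), t ^ (d - 1) • cutPow R p t = R ^ ((d : ℝ) - p) / (p - d) := by
  have hcongr : Set.EqOn (fun t : ℝ => t ^ (d - 1) • cutPow R p t)
      ((Set.Ioi R).indicator fun t => t ^ ((d : ℝ) - 1 - p)) (Set.Ioi 0) := by
    intro t (ht : 0 < t)
    dsimp only
    by_cases h : R < t
    · rw [Set.indicator_of_mem (Set.mem_Ioi.mpr h), cutPow, if_pos h, smul_eq_mul,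
        ← Real.rpow_natCast, ← Real.rpow_add ht, Nat.cast_sub (Nat.one_le_iff_ne_zero.mpr hd),
        Nat.cast_one, sub_eq_add_neg _ p]
    · rw [Set.indicator_of_notMem (by simpa using h), cutPow, if_neg h, smul_zero]
  rw [setIntegral_congr_fun measurableSet_Ioi hcongr, setIntegral_indicator measurableSet_Ioi,
    Set.Ioi_inter_Ioi, sup_eq_right.mpr hR.le, integral_Ioi_rpow_of_lt (by linarith) hR,
    show (d : ℝ) - 1 - p + 1 = d - p by ring, neg_div, ← div_neg, neg_sub]

lemma integral_cutPow_norm_addHaar {E : Type*} [NormedAddCommGroup E] [NormedSpace ℝ E]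
    [MeasurableSpace E] [BorelSpace E] [FiniteDimensional ℝ E] [Nontrivial E]
    (μ : Measure E) [μ.IsAddHaarMeasure] {R p : ℝ} (hR : 0 < R)
    (hp : (Module.finrank ℝ E : ℝ) < p) :
    ∫ y, cutPow R p ‖y‖ ∂μ = Module.finrank ℝ E * μ.real (Metric.ball 0 1) *
      (R ^ ((Module.finrank ℝ E : ℝ) - p) / (p - Module.finrank ℝ E)) := by
  rw [integral_fun_norm_addHaar μ (cutPow R p),
    integral_Ioi_pow_smul_cutPow Module.finrank_pos.ne' hR hp, nsmul_eq_mul, smul_eq_mul,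
    mul_assoc]

lemma integral_cutPow_norm_euclideanSpace {n : ℕ} (hn : n ≠ 0) {δ Γ : ℝ} (hδ : 0 < δ)
    (hΓ : 1 / 2 < Γ) :
    ∫ y : EuclideanSpace ℝ (Fin n), cutPow (cutRadius n δ) (2 * Γ * n) ‖y‖ =
      unitBallVol n ^ (2 * Γ) * δ ^ (1 - 2 * Γ) / (2 * Γ - 1) := by
  have : Nontrivial (EuclideanSpace ℝ (Fin n)) :=
    Module.nontrivial_of_finrank_pos (R := ℝ) (by rw [finrank_euclideanSpace_fin]; omega)
  have hn' : (0 : ℝ) < n := by exact_mod_cast Nat.pos_of_ne_zero hn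
  have hV := unitBallVol_pos n
  rw [integral_cutPow_norm_addHaar volume (cutRadius_pos n hδ)
      (by rw [finrank_euclideanSpace_fin]; nlinarith),
    finrank_euclideanSpace_fin, EuclideanSpace.measureReal_ball_zero_one hn,
    show (n : ℝ) - 2 * Γ * n = n * (1 - 2 * Γ) by ring, cutRadius_rpow_natCast_mul hn hδ.le,
    Real.div_rpow hδ.le hV.le, show 2 * Γ = 1 + (2 * Γ - 1) by ring, Real.rpow_add hV,
    Real.rpow_one, show 1 - (1 + (2 * Γ - 1)) = -(2 * Γ - 1) by ring, Real.rpow_neg hV.le]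
  have h2Γ : 2 * Γ - 1 ≠ 0 := by linarith
  field_simp

lemma norm_sum_smul_eq_norm_of_abs_eq_one {ι E : Type*} [Fintype ι] [SeminormedAddCommGroup E]
    [NormedSpace ℝ E] {c : ι → ℝ} {i₀ : ι} (hc : ∀ i, i ≠ i₀ → c i = 0)
    (hc₀ : |c i₀| = 1) (x : ι → E) : ‖∑ i, c i • x i‖ = ‖x i₀‖ := by
  rw [Finset.sum_eq_single_of_mem i₀ (Finset.mem_univ _)
      (fun i _ hi => by rw [hc i hi, zero_smul]),
    norm_smul, Real.norm_eq_abs, hc₀, one_mul]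

@[to_additive]
lemma prod_prod_eq_prod_of_existsUnique_mem {ι κ M : Type*} [Fintype ι] [Fintype κ]
    [CommMonoid M] {s : ι → Finset κ} (h : ∀ j, ∃! i, j ∈ s i) (f : κ → M) :
    ∏ i, ∏ j ∈ s i, f j = ∏ j, f j := by
  classical
  rw [Finset.prod_comm' (t' := Finset.univ) (s' := fun j => Finset.univ.filter (j ∈ s ·))
    (by simp)]
  refine Finset.prod_congr rfl fun j _ => ?_
  obtain ⟨i₀, hi₀, huniq⟩ := h j
  have hfiber : Finset.univ.filter (j ∈ s ·) = {i₀} := Finset.eq_singleton_iff_unique_mem.mpr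
    ⟨by simpa using hi₀, fun i hi => huniq i (by simpa using hi)⟩
  rw [hfiber, Finset.prod_singleton]

lemma prod_cutPow_norm_sum_smul {ι κ E : Type*} [Fintype ι] [Fintype κ]
    [SeminormedAddCommGroup E] [NormedSpace ℝ E] {D : Matrix ι κ ℤ}
    (hent : ∀ i j, D i j = 0 ∨ D i j = 1 ∨ D i j = -1) (hcol : ∀ j, ∃! i, D i j ≠ 0)
    (hrow : ∀ i, ∃ j, D i j ≠ 0) {R : ℝ} (hR : 0 ≤ R) (p : κ → ℝ) (x : ι → E) :
    ∏ j, cutPow R (p j) ‖∑ i, (D i j : ℝ) • x i‖ =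
      ∏ i, cutPow R (∑ j ∈ Finset.univ.filter (D i · ≠ 0), p j) ‖x i‖ := by
  have hnorm : ∀ i j, D i j ≠ 0 → ‖∑ i', (D i' j : ℝ) • x i'‖ = ‖x i‖ := by
    intro i j hij
    refine norm_sum_smul_eq_norm_of_abs_eq_one (fun i' hi' => ?_) ?_ x
    · by_contra h
      exact hi' ((hcol j).unique (by exact_mod_cast h) hij)
    · rcases hent i j with h | h | h <;> simp_all
  rw [← prod_prod_eq_prod_of_existsUnique_mem (s := fun i => Finset.univ.filter (D i · ≠ 0))
    (fun j => by simpa using hcol j)]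
  refine Finset.prod_congr rfl fun i _ => ?_
  obtain ⟨j, hj⟩ := hrow i
  rw [← prod_cutPow ⟨j, by simpa using hj⟩ hR]
  exact Finset.prod_congr rfl fun j' hj' => by rw [hnorm i j' (Finset.mem_filter.mp hj').2]

theorem product_form_mixed_exponent_integral_general
    (κ : ℕ) (δ : ℝ) (hδ : 0 < δ)
    (γ : Fin κ → ℝ) (hγ : ∀ j, 1 / 2 < γ j)
    (m : ℕ)
    (D : Matrix (Fin m) (Fin κ) ℤ)
    (hent : ∀ i j, D i j = 0 ∨ D i j = 1 ∨ D i j = -1)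
    (hcol : ∀ j, ∃! i, D i j ≠ 0)
    (hrow : ∀ i, ∃ j, D i j ≠ 0)
    (n : ℕ) (hn : 1 ≤ n) :
    unitBallVol n ^ (-(2 * ∑ j : Fin κ, γ j)) *
      ∫ x : Fin m → EuclideanSpace ℝ (Fin n),
        ∏ j : Fin κ,
          (if cutRadius n δ < ‖∑ i : Fin m, (D i j : ℝ) • x i‖ then
            ‖∑ i : Fin m, (D i j : ℝ) • x i‖ ^ (-(2 * γ j * (n : ℝ)))
          else 0)
    = δ ^ ((m : ℝ) - 2 * ∑ j : Fin κ, γ j) *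
        ∏ i : Fin m,
          1 / (2 * (∑ j ∈ Finset.univ.filter fun j => D i j ≠ 0, γ j) - 1) := by
  set Γ : Fin m → ℝ := fun i => ∑ j ∈ Finset.univ.filter fun j => D i j ≠ 0, γ j
  have hΓ : ∀ i, 1 / 2 < Γ i := fun i => by
    obtain ⟨j, hj⟩ := hrow i
    exact (hγ j).trans_le (Finset.single_le_sum (fun j _ => by linarith [hγ j])
      (by simpa using hj))
  have hΓsum : ∑ i, Γ i = ∑ j, γ j :=
    sum_sum_eq_sum_of_existsUnique_mem (fun j => by simpa using hcol j) γ
  have hfactor : ∀ x : Fin m → EuclideanSpace ℝ (Fin n),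
      ∏ j, cutPow (cutRadius n δ) (2 * γ j * n) ‖∑ i, (D i j : ℝ) • x i‖ =
        ∏ i, cutPow (cutRadius n δ) (2 * Γ i * n) ‖x i‖ := fun x => by
    rw [prod_cutPow_norm_sum_smul hent hcol hrow (cutRadius_pos n hδ).le]
    simp only [Γ, Finset.mul_sum, Finset.sum_mul]
  have hintegral : ∫ x : Fin m → EuclideanSpace ℝ (Fin n),
      ∏ i, cutPow (cutRadius n δ) (2 * Γ i * n) ‖x i‖ =
        ∏ i, unitBallVol n ^ (2 * Γ i) * δ ^ (1 - 2 * Γ i) / (2 * Γ i - 1) := by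
    rw [volume_pi, integral_fintype_prod_eq_prod
      (f := fun i y => cutPow (cutRadius n δ) (2 * Γ i * n) ‖y‖)]
    exact Finset.prod_congr rfl fun i _ =>
      integral_cutPow_norm_euclideanSpace (by omega) hδ (hΓ i)
  have hV := unitBallVol_pos n
  have hVpow : unitBallVol n ^ (2 * ∑ j, γ j) ≠ 0 := (Real.rpow_pos_of_pos hV _).ne'
  have hδexp : ∑ i, (1 - 2 * Γ i) = (m : ℝ) - 2 * ∑ j, γ j := by
    rw [Finset.sum_sub_distrib, ← Finset.mul_sum, hΓsum]
    simp
  simp only [← cutPow.eq_def, hfactor, hintegral]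
  rw [Finset.prod_div_distrib, Finset.prod_mul_distrib, ← Real.rpow_sum_of_pos hV,
    ← Real.rpow_sum_of_pos hδ, ← Finset.mul_sum, hΓsum, hδexp, Real.rpow_neg hV.le]
  field_simp
  simp only [Γ, one_div, Finset.prod_inv_distrib]

/-- for a `{0,±1}`-matrix `D` with exactly one nonzero entry in each column
and no zero row, with `Γ_i(D) = Σ_{j ∈ I_i(D)} γ_j` summing the exponents over the columns
whose nonzero entry lies in row `i`, one has for all `n ≥ 1`:
`V_n^{-2Σγ_j} ∫⋯∫ ∏_j |Σ_i d_{ij} x_i|^{-2γ_j n} 1_{|Σ_i d_{ij} x_i| > R_n(δ)} dx_1⋯dx_m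
 = δ^{m - 2Σγ_j} ∏_i (2Γ_i(D) - 1)⁻¹`. -/
theorem product_form_mixed_exponent_integral
    (κ : ℕ) (hκ : 2 ≤ κ) (δ : ℝ) (hδ : 0 < δ)
    (γ : Fin κ → ℝ) (hγ : ∀ j, 1 / 2 < γ j)
    (m : ℕ) (hm1 : 1 ≤ m)
    (D : Matrix (Fin m) (Fin κ) ℤ)
    (hent : ∀ i j, D i j = 0 ∨ D i j = 1 ∨ D i j = -1)
    (hcol : ∀ j, ∃! i, D i j ≠ 0)
    (hrow : ∀ i, ∃ j, D i j ≠ 0)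
    (n : ℕ) (hn : 1 ≤ n) :
    unitBallVol n ^ (-(2 * ∑ j : Fin κ, γ j)) *
      ∫ x : Fin m → EuclideanSpace ℝ (Fin n),
        ∏ j : Fin κ,
          (if cutRadius n δ < ‖∑ i : Fin m, (D i j : ℝ) • x i‖ then
            ‖∑ i : Fin m, (D i j : ℝ) • x i‖ ^ (-(2 * γ j * (n : ℝ)))
          else 0)
    = δ ^ ((m : ℝ) - 2 * ∑ j : Fin κ, γ j) *
        ∏ i : Fin m,
          1 / (2 * (∑ j ∈ Finset.univ.filter fun j => D i j ≠ 0, γ j) - 1) :=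
  product_form_mixed_exponent_integral_general κ δ hδ γ hγ m D hent hcol hrow n hn
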